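/- There is a constant c_d > 0 depending only on d such that the following holds. Let d ≥ 2, let U ⊆ ℝ^d be a U-shaped closed convex set with nonempty interior, let ε > 0, let q be a frontier point of U, and let h be a non-vertical supporting hyperplane of U at q, written h = {x ∈ ℝ^d : x_d = ⟨p̂, x̂⟩ − p_d} for a point p ∈ ℝ^d. If π(DBase) is compact and q̂ lies in the interior of π(DBase) as a subset of ℝ^{d−1}, then H^{d−1}(π(DBase)) · H^{d−1}(π(CBase)) ≥ c_d · ε^{d−1}. -/

import Mathlib

open MeasureTheory Metric Set
open scoped RealInnerProductSpace ENNReal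

noncomputable section

/-- Vertical projection `ℝ^d = ℝ^{d-1} × ℝ → ℝ^{d-1}` (forget the last coordinate). -/
def vproj (n : ℕ) (x : EuclideanSpace ℝ (Fin (n + 1))) : EuclideanSpace ℝ (Fin n) :=
  WithLp.toLp 2 (fun j : Fin n => x j.castSucc)

/-- The last standard basis vector `e_d` of `ℝ^d` (`d = n + 1`). -/
def ed (n : ℕ) : EuclideanSpace ℝ (Fin (n + 1)) := EuclideanSpace.single (Fin.last n) 1

/-- The projective dual of a U-shaped closed convex set. -/
def Udual {n : ℕ} (U : Set (EuclideanSpace ℝ (Fin (n + 1)))) :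
    Set (EuclideanSpace ℝ (Fin (n + 1))) :=
  {y | ∀ z ∈ U, ⟪vproj n y, vproj n z⟫ - z (Fin.last n) ≤ y (Fin.last n)}

/-! Translate `π(DBase)` so that `q̂` becomes the origin and call the resulting convex body `K`.
For `z ∈ U`, the segment from `q - ε e_d` to `z` crosses `h` at a point of `DBase`; testing that
point against the polar body `K°` shows `p̂ + ε K° ⊆ π(CBase)`, so the volume product is at least
`ε^{d-1} vol(K) vol(K°)`. For the latter, pick `v₁, …, vₘ ∈ K` (`m = d - 1`) maximizing `|det|`.
By Cramer's rule and maximality the dual basis lies in `K°`, and `K`, `K°` contain the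
parallelepipeds spanned by the two bases scaled by `1/m`, whose volumes are reciprocal; hence
`vol(K) vol(K°) ≥ m^{-2m}`. -/

open Module
open scoped Pointwise Matrix

theorem smul_parallelepiped_subset {ι E : Type*} [Fintype ι] [AddCommGroup E] [Module ℝ E]
    {S : Set E} (hS : Convex ℝ S) (h0 : (0 : E) ∈ S) {u : ι → E} (hu : ∀ i, u i ∈ S) :
    (Fintype.card ι : ℝ)⁻¹ • parallelepiped u ⊆ S := by
  rintro _ ⟨x, hx, rfl⟩
  obtain ⟨t, ht, rfl⟩ := (mem_parallelepiped_iff _ _).1 hx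
  rcases isEmpty_or_nonempty ι with hι | hι
  · simpa using h0
  show (Fintype.card ι : ℝ)⁻¹ • ∑ i, t i • u i ∈ S
  rw [Finset.smul_sum]
  refine hS.sum_mem (w := fun _ => (Fintype.card ι : ℝ)⁻¹) (z := fun i => t i • u i)
    (fun _ _ => by positivity) ?_ fun i _ => hS.smul_mem_of_zero_mem h0 (hu i) ⟨ht.1 i, ht.2 i⟩
  simp [Finset.card_univ]

section PolarBody

variable {E : Type*} [NormedAddCommGroup E] [InnerProductSpace ℝ E]

/-- The polar body of convex geometry; Mathlib's `LinearMap.polar` is the absolute polar. -/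
def polarBody (K : Set E) : Set E := {y | ∀ x ∈ K, ⟪x, y⟫ ≤ 1}

theorem convex_polarBody (K : Set E) : Convex ℝ (polarBody K) := by
  intro y hy z hz a b _ _ hab x hx
  calc ⟪x, a • y + b • z⟫ = a * ⟪x, y⟫ + b * ⟪x, z⟫ := by
        rw [inner_add_right, real_inner_smul_right, real_inner_smul_right]
    _ ≤ a * 1 + b * 1 := by gcongr <;> [exact hy x hx; exact hz x hx]
    _ = 1 := by rw [mul_one, mul_one, hab]

theorem zero_mem_polarBody (K : Set E) : (0 : E) ∈ polarBody K := fun x _ => by simp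

end PolarBody

namespace OrthonormalBasis

variable {ι E : Type*} [Fintype ι] [DecidableEq ι] [NormedAddCommGroup E] [InnerProductSpace ℝ E]
  (e : OrthonormalBasis ι ℝ E)

theorem det_mul_det_eq_one {v w : ι → E} (hvw : ∀ i j, ⟪w i, v j⟫ = if i = j then 1 else 0) :
    e.toBasis.det w * e.toBasis.det v = 1 := by
  have hgram : (e.toBasis.toMatrix w)ᵀ * e.toBasis.toMatrix v = 1 := by
    ext i j
    rw [Matrix.one_apply, ← hvw, ← e.sum_inner_mul_inner]
    simp only [Matrix.mul_apply, Matrix.transpose_apply, Basis.toMatrix_apply,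
      e.coe_toBasis_repr_apply, e.repr_apply_apply, real_inner_comm]
  rw [Basis.det_apply, Basis.det_apply, ← Matrix.det_transpose, ← Matrix.det_mul, hgram,
    Matrix.det_one]

theorem exists_isMaxOn_abs_det {K : Set E} (hK : IsCompact K) (hne : K.Nonempty) :
    ∃ v ∈ univ.pi fun _ => K, IsMaxOn (fun v => |e.toBasis.det v|) (univ.pi fun _ => K) v := by
  refine (isCompact_univ_pi fun _ => hK).exists_isMaxOn (univ_pi_nonempty_iff.2 fun _ => hne)
    (Continuous.continuousOn ?_)
  simp_rw [e.toBasis.det_apply]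
  refine (Continuous.matrix_det <| continuous_pi fun i => continuous_pi fun j => ?_).abs
  simp only [Basis.toMatrix_apply, e.coe_toBasis_repr_apply]
  fun_prop

theorem det_ne_zero_of_isMaxOn {K : Set E} (h0 : (0 : E) ∈ interior K) {v : ι → E}
    (hmax : IsMaxOn (fun v => |e.toBasis.det v|) (univ.pi fun _ => K) v) :
    e.toBasis.det v ≠ 0 := by
  obtain ⟨r, hr, hball⟩ := Metric.mem_nhds_iff.1 (mem_interior_iff_mem_nhds.1 h0)
  have hsmall : (fun i => (r / 2) • e i) ∈ univ.pi fun _ => K := fun i _ =>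
    hball (by simp [norm_smul, abs_of_pos hr, hr])
  have hle : |e.toBasis.det fun i => (r / 2) • e.toBasis i| ≤ |e.toBasis.det v| := by
    simpa using hmax hsmall
  rw [AlternatingMap.map_smul_univ, Basis.det_self, smul_eq_mul, mul_one] at hle
  exact abs_pos.1 ((by positivity : 0 < |∏ _i : ι, r / 2|).trans_le hle)

theorem exists_biorthogonal_of_isMaxOn [FiniteDimensional ℝ E] {K : Set E} {v : ι → E}
    (hvK : v ∈ univ.pi fun _ => K)
    (hmax : IsMaxOn (fun v => |e.toBasis.det v|) (univ.pi fun _ => K) v)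
    (hv : e.toBasis.det v ≠ 0) :
    ∃ w : ι → E, (∀ i, w i ∈ polarBody K) ∧ ∀ i j, ⟪w i, v j⟫ = if i = j then 1 else 0 := by
  -- `w i` represents the Cramer coordinate `x ↦ det (update v i x) / det v`, which maximality of
  -- `|det v|` bounds by `1` on `K`.
  let cramer (i : ι) : E →ₗ[ℝ] ℝ :=
    (e.toBasis.det v)⁻¹ • e.toBasis.det.toMultilinearMap.toLinearMap v i
  let w (i : ι) : E := (InnerProductSpace.toDual ℝ E).symm (cramer i).toContinuousLinearMap
  have hw (i : ι) (x : E) :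
      ⟪w i, x⟫ = (e.toBasis.det v)⁻¹ * e.toBasis.det (Function.update v i x) := by
    rw [InnerProductSpace.toDual_symm_apply]
    simp [cramer]
  refine ⟨w, fun i x hx => ?_, fun i j => ?_⟩
  · have hle : |e.toBasis.det (Function.update v i x)| ≤ |e.toBasis.det v| :=
      hmax fun j _ => by
        rcases eq_or_ne j i with rfl | hji
        · simpa using hx
        · simpa [hji] using hvK j
    rw [real_inner_comm, hw, ← div_eq_inv_mul]
    exact (le_abs_self _).trans <| by rwa [abs_div, div_le_one (abs_pos.2 hv)]
  · rw [hw]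
    split_ifs with hij
    · rw [hij, Function.update_eq_self, inv_mul_cancel₀ hv]
    · rw [AlternatingMap.map_update_self _ _ hij, mul_zero]

theorem volume_parallelepiped_eq_abs_det [FiniteDimensional ℝ E] [MeasurableSpace E] [BorelSpace E]
    (v : ι → E) :
    volume (parallelepiped v) = ENNReal.ofReal |e.toBasis.det v| := by
  rw [← e.addHaar_eq_volume, Measure.addHaar_parallelepiped]

end OrthonormalBasis

section Mahler

variable {E : Type*} [NormedAddCommGroup E] [InnerProductSpace ℝ E] [FiniteDimensional ℝ E]
  [MeasurableSpace E] [BorelSpace E]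

theorem ofReal_mul_volume_parallelepiped_le {S : Set E} (hS : Convex ℝ S) (h0 : (0 : E) ∈ S)
    {u : Fin (finrank ℝ E) → E} (hu : ∀ i, u i ∈ S) :
    ENNReal.ofReal ((finrank ℝ E : ℝ) ^ finrank ℝ E)⁻¹ * volume (parallelepiped u) ≤ volume S :=
  calc ENNReal.ofReal ((finrank ℝ E : ℝ) ^ finrank ℝ E)⁻¹ * volume (parallelepiped u)
      = volume ((finrank ℝ E : ℝ)⁻¹ • parallelepiped u) := by
        rw [Measure.addHaar_smul, inv_pow, abs_of_nonneg (by positivity)]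
    _ ≤ volume S := measure_mono <| by
        simpa using smul_parallelepiped_subset hS h0 hu

theorem ofReal_le_volume_mul_volume_polarBody {K : Set E} (hK : IsCompact K) (hKc : Convex ℝ K)
    (h0 : (0 : E) ∈ interior K) :
    ENNReal.ofReal (((finrank ℝ E : ℝ) ^ finrank ℝ E)⁻¹ ^ 2) ≤ volume K * volume (polarBody K) := by
  set e := stdOrthonormalBasis ℝ E
  obtain ⟨v, hvK, hmax⟩ := e.exists_isMaxOn_abs_det hK ⟨0, interior_subset h0⟩
  obtain ⟨w, hwK, hvw⟩ :=
    e.exists_biorthogonal_of_isMaxOn hvK hmax (e.det_ne_zero_of_isMaxOn h0 hmax)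
  have hvol : volume (parallelepiped v) * volume (parallelepiped w) = 1 := by
    rw [e.volume_parallelepiped_eq_abs_det, e.volume_parallelepiped_eq_abs_det,
      ← ENNReal.ofReal_mul (abs_nonneg _), ← abs_mul, mul_comm, e.det_mul_det_eq_one hvw, abs_one,
      ENNReal.ofReal_one]
  calc ENNReal.ofReal (((finrank ℝ E : ℝ) ^ finrank ℝ E)⁻¹ ^ 2)
      = ENNReal.ofReal ((finrank ℝ E : ℝ) ^ finrank ℝ E)⁻¹ * volume (parallelepiped v) *
          (ENNReal.ofReal ((finrank ℝ E : ℝ) ^ finrank ℝ E)⁻¹ * volume (parallelepiped w)) := by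
        rw [mul_mul_mul_comm, hvol, mul_one, ← ENNReal.ofReal_mul (by positivity), sq]
    _ ≤ volume K * volume (polarBody K) :=
        mul_le_mul' (ofReal_mul_volume_parallelepiped_le hKc (interior_subset h0) (hvK · trivial))
          (ofReal_mul_volume_parallelepiped_le (convex_polarBody K) (zero_mem_polarBody K) hwK)

end Mahler

section Geometry

variable {n : ℕ}

@[simp] theorem vproj_add (x y : EuclideanSpace ℝ (Fin (n + 1))) :
    vproj n (x + y) = vproj n x + vproj n y := rfl

@[simp] theorem vproj_sub (x y : EuclideanSpace ℝ (Fin (n + 1))) :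
    vproj n (x - y) = vproj n x - vproj n y := rfl

@[simp] theorem vproj_smul (c : ℝ) (x : EuclideanSpace ℝ (Fin (n + 1))) :
    vproj n (c • x) = c • vproj n x := rfl

theorem isLinearMap_vproj : IsLinearMap ℝ (vproj n) := ⟨vproj_add, vproj_smul⟩

@[simp] theorem vproj_ed : vproj n (ed n) = 0 := by
  ext j
  simp [vproj, ed]

@[simp] theorem ed_last : ed n (Fin.last n) = 1 := by simp [ed]

theorem exists_vproj_eq_and_last_eq (w : EuclideanSpace ℝ (Fin n)) (c : ℝ) :
    ∃ y : EuclideanSpace ℝ (Fin (n + 1)), vproj n y = w ∧ y (Fin.last n) = c :=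
  ⟨WithLp.toLp 2 (Fin.snoc (α := fun _ => ℝ) w c), by ext j; simp [vproj], by simp⟩

theorem convex_nonvertical_hyperplane (a : EuclideanSpace ℝ (Fin n)) (c : ℝ) :
    Convex ℝ {x : EuclideanSpace ℝ (Fin (n + 1)) | x (Fin.last n) = ⟪a, vproj n x⟫ - c} := by
  intro x hx y hy s t _ _ hst
  simp only [mem_ofPred_eq, PiLp.add_apply, PiLp.smul_apply, smul_eq_mul, vproj_add, vproj_smul,
    inner_add_right, real_inner_smul_right] at hx hy ⊢
  rw [hx, hy]
  linear_combination (-c) * hst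

theorem not_forall_le_of_upShaped {U : Set (EuclideanSpace ℝ (Fin (n + 1)))} (hne : U.Nonempty)
    (hup : ∀ x ∈ U, ∀ t : ℝ, 0 ≤ t → x + t • ed n ∈ U) (f : EuclideanSpace ℝ (Fin n) → ℝ) :
    ¬ ∀ x ∈ U, x (Fin.last n) ≤ f (vproj n x) := by
  obtain ⟨x, hx⟩ := hne
  intro hle
  have := hle _ (hup x hx _ (le_max_left 0 (f (vproj n x) - x (Fin.last n) + 1)))
  simp only [vproj_add, vproj_smul, vproj_ed, smul_zero, add_zero, PiLp.add_apply,
    PiLp.smul_apply, ed_last, smul_eq_mul, mul_one] at this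
  linarith [le_max_right 0 (f (vproj n x) - x (Fin.last n) + 1)]

def DBase (U : Set (EuclideanSpace ℝ (Fin (n + 1)))) (ε : ℝ)
    (q p : EuclideanSpace ℝ (Fin (n + 1))) :
    Set (EuclideanSpace ℝ (Fin (n + 1))) :=
  {x | x (Fin.last n) = ⟪vproj n p, vproj n x⟫ - p (Fin.last n)} ∩
    closure (convexHull ℝ (U ∪ {q - ε • ed n}))

def CBase (U : Set (EuclideanSpace ℝ (Fin (n + 1)))) (ε : ℝ) (q : EuclideanSpace ℝ (Fin (n + 1))) :
    Set (EuclideanSpace ℝ (Fin (n + 1))) :=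
  Udual U ∩ {y | y (Fin.last n) = ⟪vproj n q, vproj n y⟫ - q (Fin.last n) + ε}

theorem convex_vproj_image_DBase (U : Set (EuclideanSpace ℝ (Fin (n + 1)))) (ε : ℝ)
    (q p : EuclideanSpace ℝ (Fin (n + 1))) : Convex ℝ (vproj n '' DBase U ε q p) :=
  ((convex_nonvertical_hyperplane _ _).inter (convex_convexHull ℝ _).closure).is_linear_image
    isLinearMap_vproj

section Bases

variable {U : Set (EuclideanSpace ℝ (Fin (n + 1)))} {ε : ℝ} {q p z : EuclideanSpace ℝ (Fin (n + 1))}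

/-- The segment from `q - ε e_d` to `z` crosses `h` where the weight on `z` is `ε / (ε + s)`,
`s` being the height of `z` above `h`. -/
theorem add_smul_sub_mem_vproj_image_DBase (hε : 0 < ε)
    (hq : q (Fin.last n) = ⟪vproj n p, vproj n q⟫ - p (Fin.last n)) (hz : z ∈ U) {s : ℝ}
    (hs0 : 0 ≤ s) (hs : z (Fin.last n) = ⟪vproj n p, vproj n z⟫ - p (Fin.last n) + s) :
    vproj n q + (ε / (ε + s)) • (vproj n z - vproj n q) ∈ vproj n '' DBase U ε q p := by
  have hεs : 0 < ε + s := by linarith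
  have hμ : s / (ε + s) = 1 - ε / (ε + s) := by field_simp; ring
  refine ⟨(ε / (ε + s)) • z + (s / (ε + s)) • (q - ε • ed n), ⟨?_, subset_closure ?_⟩, ?_⟩
  · simp only [mem_ofPred_eq, PiLp.add_apply, PiLp.smul_apply, PiLp.sub_apply, smul_eq_mul,
      ed_last, vproj_add, vproj_smul, vproj_sub, vproj_ed, smul_zero, sub_zero, inner_add_right,
      real_inner_smul_right]
    rw [hq, hs]
    field_simp
    ring
  · exact convex_convexHull ℝ (U ∪ {q - ε • ed n}) (subset_convexHull ℝ _ (mem_union_left _ hz))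
      (subset_convexHull ℝ _ (mem_union_right _ rfl)) (by positivity) (by positivity)
      (by rw [hμ]; ring)
  · simp only [vproj_add, vproj_smul, vproj_sub, vproj_ed, smul_zero, sub_zero]
    rw [hμ, sub_smul, one_smul, smul_sub]
    abel

theorem vadd_smul_polarBody_subset_vproj_image_CBase (hε : 0 < ε)
    (hq : q (Fin.last n) = ⟪vproj n p, vproj n q⟫ - p (Fin.last n))
    (hsupp : ∀ x ∈ U, ⟪vproj n p, vproj n x⟫ - p (Fin.last n) ≤ x (Fin.last n)) :
    vproj n p +ᵥ ε • polarBody (-vproj n q +ᵥ vproj n '' DBase U ε q p) ⊆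
      vproj n '' CBase U ε q := by
  rintro _ ⟨_, ⟨v, hv, rfl⟩, rfl⟩
  obtain ⟨y, hyw, hyd⟩ := exists_vproj_eq_and_last_eq (vproj n p +ᵥ ε • v)
    (⟪vproj n q, vproj n p +ᵥ ε • v⟫ - q (Fin.last n) + ε)
  refine ⟨y, ⟨fun z hz => ?_, by rw [mem_ofPred_eq, hyw, hyd]⟩, hyw⟩
  set s := z (Fin.last n) - (⟪vproj n p, vproj n z⟫ - p (Fin.last n)) with hs
  have hs0 : 0 ≤ s := sub_nonneg.2 (hsupp z hz)
  have key : ε * ⟪vproj n z - vproj n q, v⟫ ≤ ε + s := by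
    have := hv _ (vadd_mem_vadd_set
      (add_smul_sub_mem_vproj_image_DBase hε hq hz hs0 (by rw [hs]; ring)))
    rwa [vadd_eq_add, neg_add_cancel_left, real_inner_smul_left, div_mul_eq_mul_div,
      div_le_one (by linarith)] at this
  rw [hyw, hyd, vadd_eq_add, inner_add_left, inner_add_right, real_inner_smul_left,
    real_inner_smul_right, real_inner_comm (vproj n p)]
  rw [inner_sub_left, real_inner_comm v (vproj n z)] at key
  linarith

end Bases

end Geometry

theorem base_product_lower_bound_general (n : ℕ) :
    ∃ c : ℝ, 0 < c ∧
      ∀ (U : Set (EuclideanSpace ℝ (Fin (n + 1)))),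
        IsClosed U → Convex ℝ U → (interior U).Nonempty →
        (∀ x ∈ U, ∀ t : ℝ, 0 ≤ t → x + t • ed n ∈ U) →
        ∀ ε : ℝ, 0 < ε →
        ∀ q : EuclideanSpace ℝ (Fin (n + 1)), q ∈ frontier U →
        ∀ p : EuclideanSpace ℝ (Fin (n + 1)),
          q (Fin.last n) = ⟪vproj n p, vproj n q⟫ - p (Fin.last n) →
          ((∀ x ∈ U, ⟪vproj n p, vproj n x⟫ - p (Fin.last n) ≤ x (Fin.last n)) ∨
           (∀ x ∈ U, x (Fin.last n) ≤ ⟪vproj n p, vproj n x⟫ - p (Fin.last n))) →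
          IsCompact (vproj n ''
            ({x | x (Fin.last n) = ⟪vproj n p, vproj n x⟫ - p (Fin.last n)} ∩
              closure (convexHull ℝ (U ∪ {q - ε • ed n})))) →
          vproj n q ∈ interior (vproj n ''
            ({x | x (Fin.last n) = ⟪vproj n p, vproj n x⟫ - p (Fin.last n)} ∩
              closure (convexHull ℝ (U ∪ {q - ε • ed n})))) →
          ENNReal.ofReal (c * ε ^ n) ≤
            volume (vproj n ''
              ({x | x (Fin.last n) = ⟪vproj n p, vproj n x⟫ - p (Fin.last n)} ∩
                closure (convexHull ℝ (U ∪ {q - ε • ed n})))) *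
            volume (vproj n ''
              (Udual U ∩
                {y : EuclideanSpace ℝ (Fin (n + 1)) |
                  y (Fin.last n) = ⟪vproj n q, vproj n y⟫ - q (Fin.last n) + ε})) := by
  refine ⟨((n : ℝ) ^ n)⁻¹ ^ 2, ?_, ?_⟩
  · have : (0 : ℝ) < (n : ℝ) ^ n := by exact_mod_cast Nat.pow_self_pos
    positivity
  intro U _ _ hUint hUshape ε hε q _ p hq hdisj hAcomp hqint
  have hsupp := hdisj.resolve_right <| not_forall_le_of_upShaped (hUint.mono interior_subset)
    hUshape fun w => ⟪vproj n p, w⟫ - p (Fin.last n)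
  set K := -vproj n q +ᵥ vproj n '' DBase U ε q p
  have hK0 : (0 : EuclideanSpace ℝ (Fin n)) ∈ interior K := by
    rw [interior_vadd, ← neg_add_cancel (vproj n q)]
    exact vadd_mem_vadd_set hqint
  have hmahler := ofReal_le_volume_mul_volume_polarBody (hAcomp.vadd _)
    ((convex_vproj_image_DBase U ε q p).vadd _) hK0
  rw [finrank_euclideanSpace_fin] at hmahler
  calc ENNReal.ofReal (((n : ℝ) ^ n)⁻¹ ^ 2 * ε ^ n)
      = ENNReal.ofReal (((n : ℝ) ^ n)⁻¹ ^ 2) * ENNReal.ofReal (ε ^ n) :=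
        ENNReal.ofReal_mul (by positivity)
    _ ≤ volume K * volume (polarBody K) * ENNReal.ofReal (ε ^ n) := by gcongr; exact hmahler
    _ = volume (vproj n '' DBase U ε q p) * volume (vproj n p +ᵥ ε • polarBody K) := by
        rw [measure_vadd, measure_vadd, Measure.addHaar_smul, finrank_euclideanSpace_fin,
          abs_of_pos (by positivity)]
        ring
    _ ≤ _ := mul_le_mul_right
        (measure_mono (vadd_smul_polarBody_subset_vproj_image_CBase hε hq hsupp)) _

/-- Mahler-volume bound for bases: there is `c_d > 0` such that, in the
setting of the projective-dual correspondence, if the projected dual-cap base `π(DBase)`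
is compact with `q̂` in its interior, then
`H^{d-1}(π(DBase)) · H^{d-1}(π(CBase)) ≥ c_d · ε^{d-1}`. -/
theorem base_product_lower_bound (n : ℕ) (hn : 1 ≤ n) :
    ∃ c : ℝ, 0 < c ∧
      ∀ (U : Set (EuclideanSpace ℝ (Fin (n + 1)))),
        IsClosed U → Convex ℝ U → (interior U).Nonempty →
        (∀ x ∈ U, ∀ t : ℝ, 0 ≤ t → x + t • ed n ∈ U) →
        ∀ ε : ℝ, 0 < ε →
        ∀ q : EuclideanSpace ℝ (Fin (n + 1)), q ∈ frontier U →
        ∀ p : EuclideanSpace ℝ (Fin (n + 1)),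
          q (Fin.last n) = ⟪vproj n p, vproj n q⟫ - p (Fin.last n) →
          ((∀ x ∈ U, ⟪vproj n p, vproj n x⟫ - p (Fin.last n) ≤ x (Fin.last n)) ∨
           (∀ x ∈ U, x (Fin.last n) ≤ ⟪vproj n p, vproj n x⟫ - p (Fin.last n))) →
          IsCompact (vproj n ''
            ({x | x (Fin.last n) = ⟪vproj n p, vproj n x⟫ - p (Fin.last n)} ∩
              closure (convexHull ℝ (U ∪ {q - ε • ed n})))) →
          vproj n q ∈ interior (vproj n ''
            ({x | x (Fin.last n) = ⟪vproj n p, vproj n x⟫ - p (Fin.last n)} ∩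
              closure (convexHull ℝ (U ∪ {q - ε • ed n})))) →
          ENNReal.ofReal (c * ε ^ n) ≤
            volume (vproj n ''
              ({x | x (Fin.last n) = ⟪vproj n p, vproj n x⟫ - p (Fin.last n)} ∩
                closure (convexHull ℝ (U ∪ {q - ε • ed n})))) *
            volume (vproj n ''
              (Udual U ∩
                {y : EuclideanSpace ℝ (Fin (n + 1)) |
                  y (Fin.last n) = ⟪vproj n q, vproj n y⟫ - q (Fin.last n) + ε})) :=
  base_product_lower_bound_general n

end
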